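/- arXiv:2505.02499 — 5 statements merged into one kernel-verified Lean document; each statement's English description precedes it below -/
import Mathlib

section
/- Let F be a finite field, n a natural number, G an n × n matrix over F, S a finite subset of Fin n with |S| = w, and j : Fin n. For a key vector K : Fin n → F write X = K ᵥ* G, i.e., X i = ∑ l, K l * G l i. Assume the family of vectors consisting of the columns of G indexed by S together with the standard basis vector e_j (the vector that is 1 in coordinate j and 0 elsewhere) is linearly independent. Then for every assignment x : S → F of values to the observed coded symbols and every a : F, the number of key vectors K : Fin n → F satisfying X i = x i for all i ∈ S and K j = a equals |F|^(n − w − 1); in particular this count does not depend on x or a. -/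
/-- Fiber-counting form of individual security for CHOKE.  If the columns of `G` indexed
by `S` (with `|S| = w`) together with the standard basis vector `e_j` are linearly
independent, then for every assignment `x : S → F` of observed coded symbols and every
`a : F`, the number of key vectors `K` with `(K ᵥ* G) i = x i` for all `i ∈ S` and
`K j = a` is `|F| ^ (n - w - 1)`, independently of `x` and `a`. -/
theorem stmt_5 (F : Type*) [Field F] [Fintype F] (n w : ℕ)
    (G : Matrix (Fin n) (Fin n) F) (S : Finset (Fin n)) (hS : S.card = w) (j : Fin n)
    (hli : LinearIndependent F
      (Sum.elim (fun i : S => fun l : Fin n => G l (i : Fin n))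
        (fun _ : Unit => Pi.single j (1 : F)))) :
    ∀ (x : S → F) (a : F),
      Nat.card {K : Fin n → F //
          (∀ i : S, ∑ l, K l * G l (i : Fin n) = x i) ∧ K j = a} =
        Fintype.card F ^ (n - w - 1) := by
  classical
  intro x a
  set v : (↥S ⊕ Unit) → (Fin n → F) :=
    Sum.elim (fun i : S => fun l : Fin n => G l (i : Fin n))
      (fun _ : Unit => Pi.single j (1 : F)) with hv
  set M : Matrix (↥S ⊕ Unit) (Fin n) F := Matrix.of v with hM
  set ψ : (Fin n → F) →ₗ[F] (↥S ⊕ Unit → F) := M.mulVecLin with hψdef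
  have hcardι : Fintype.card (↥S ⊕ Unit) = w + 1 := by
    simp [Fintype.card_sum, hS]
  -- rank of M
  have hrank : M.rank = w + 1 := by
    rw [Matrix.rank_eq_finrank_span_row]
    have : Set.range M.row = Set.range v := rfl
    rw [this, finrank_span_eq_card hli, hcardι]
  -- surjectivity of ψ
  have hsurj : Function.Surjective ψ := by
    rw [← LinearMap.range_eq_top]
    apply Submodule.eq_top_of_finrank_eq
    have h1 : Module.finrank F (↥S ⊕ Unit → F) = w + 1 := by
      rw [Module.finrank_pi, hcardι]
    rw [h1]
    exact hrank
  have hwn : w + 1 ≤ n := by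
    have h := M.rank_le_card_width
    rw [hrank, Fintype.card_fin] at h
    exact h
  -- kernel dimension
  have hker : Module.finrank F (LinearMap.ker ψ) = n - (w + 1) := by
    have h := LinearMap.finrank_range_add_finrank_ker ψ
    have h1 : Module.finrank F (Fin n → F) = n := by simp
    have h2 : Module.finrank F (LinearMap.range ψ) = w + 1 := hrank
    rw [h1, h2] at h
    omega
  -- description of ψ
  have hψ : ∀ (K : Fin n → F) (s : ↥S ⊕ Unit),
      ψ K s = Sum.elim (fun i : ↥S => ∑ l, K l * G l (i : Fin n)) (fun _ => K j) s := by
    intro K s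
    cases s with
    | inl i =>
      simp [hψdef, hM, hv, Matrix.mulVec, dotProduct, mul_comm]
    | inr u =>
      simp [hψdef, hM, hv, Matrix.mulVec, dotProduct, Pi.single_apply]
  set y : ↥S ⊕ Unit → F := Sum.elim x (fun _ => a) with hy
  have hiff : ∀ K : Fin n → F,
      ((∀ i : S, ∑ l, K l * G l (i : Fin n) = x i) ∧ K j = a) ↔ ψ K = y := by
    intro K
    constructor
    · rintro ⟨h1, h2⟩
      funext s
      cases s with
      | inl i => rw [hψ]; exact h1 i
      | inr u => rw [hψ]; exact h2
    · intro h
      constructor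
      · intro i
        have := congrFun h (Sum.inl i)
        rwa [hψ] at this
      · have := congrFun h (Sum.inr ())
        rwa [hψ] at this
  obtain ⟨K₀, hK₀⟩ := hsurj y
  -- equivalence with the kernel
  have e : {K : Fin n → F //
      (∀ i : S, ∑ l, K l * G l (i : Fin n) = x i) ∧ K j = a} ≃ LinearMap.ker ψ :=
  { toFun := fun K => ⟨K.1 - K₀, by
      rw [LinearMap.mem_ker, map_sub, (hiff K.1).mp K.2, hK₀, sub_self]⟩
    invFun := fun K => ⟨K.1 + K₀, by
      apply (hiff _).mpr
      rw [map_add, LinearMap.mem_ker.mp K.2, hK₀, zero_add]⟩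
    left_inv := fun K => by simp
    right_inv := fun K => by simp }
  rw [Nat.card_congr e]
  have : Fintype (LinearMap.ker ψ) := Fintype.ofFinite _
  rw [Nat.card_eq_fintype_card, Module.card_eq_pow_finrank (K := F), hker]
  congr 1
end

section
/- Let F be a finite field, n a natural number, G an n × n matrix over F, S a finite subset of Fin n, and j : Fin n. For a key vector K : Fin n → F write X = K ᵥ* G, i.e., X i = ∑ l, K l * G l i. Assume the family of vectors consisting of the columns of G indexed by S together with the standard basis vector e_j is linearly independent. Then the pushforward of the uniform PMF on (Fin n → F) under the map K ↦ ((fun i : S => X i), K j) equals the uniform PMF on (S → F) × F. In particular, the observed coded symbols (X i)_{i ∈ S} are jointly independent of the individual key K j, and K j is uniformly distributed. -/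
open Function

lemma uniform_map_of_addHom {α β : Type*} [Fintype α] [Fintype β] [Nonempty α] [Nonempty β]
    [AddGroup α] [AddGroup β] (f : α →+ β) (hf : Surjective f) :
    (PMF.uniformOfFintype α).map f = PMF.uniformOfFintype β := by
  classical
  have hcard : (Fintype.card α : ℕ) = Fintype.card β * Fintype.card f.ker := by
    have h1 := AddSubgroup.card_eq_card_quotient_mul_card_addSubgroup f.ker
    have h2 : Nat.card (α ⧸ f.ker) = Nat.card β :=
      Nat.card_congr (QuotientAddGroup.quotientKerEquivOfSurjective f hf).toEquiv
    rw [h2] at h1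
    simpa [Nat.card_eq_fintype_card] using h1
  ext b
  have hfib : (Finset.univ.filter fun a => b = f a).card = Fintype.card f.ker := by
    rw [← Fintype.card_coe]
    refine Fintype.card_congr (Equiv.trans
      (Equiv.subtypeEquivRight (q := fun a => a ∈ f ⁻¹' {b}) fun a => by
        simp [Set.mem_preimage, eq_comm])
      (f.fiberEquivKerOfSurjective hf b))
  rw [PMF.map_apply, tsum_fintype, PMF.uniformOfFintype_apply]
  simp only [PMF.uniformOfFintype_apply]
  rw [← Finset.sum_filter, Finset.sum_const, hfib]
  have hk : (Fintype.card f.ker : ENNReal) ≠ 0 := by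
    exact_mod_cast Fintype.card_ne_zero
  have hk' : (Fintype.card f.ker : ENNReal) ≠ ⊤ := ENNReal.natCast_ne_top _
  have hb : ((Fintype.card β : ℕ) : ENNReal) ≠ 0 := by exact_mod_cast Fintype.card_ne_zero
  rw [nsmul_eq_mul, hcard, Nat.cast_mul,
    ENNReal.mul_inv (Or.inl hb) (Or.inr hk),
    mul_comm ((Fintype.card β : ENNReal))⁻¹, ← mul_assoc,
    ENNReal.mul_inv_cancel hk hk', one_mul]

lemma mulVec_surjective_of_li {F m n : Type*} [Field F] [Fintype m] [Fintype n]
    (M : Matrix m n F) (h : LinearIndependent F (fun k => M k)) :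
    Surjective M.mulVec := by
  have hr : M.rank = Fintype.card m := h.rank_matrix
  have htop : LinearMap.range M.mulVecLin = ⊤ := by
    apply Submodule.eq_top_of_finrank_eq
    rw [← Matrix.rank, hr, Module.finrank_pi]
  intro y
  obtain ⟨K, hK⟩ := LinearMap.range_eq_top.mp htop y
  exact ⟨K, hK⟩

/-- Distributional form of individual security for CHOKE.  If the columns of `G` indexed
by `S` together with the standard basis vector `e_j` are linearly independent, then the
pushforward of the uniform PMF on key vectors `K : Fin n → F` under
`K ↦ ((fun i : S => (K ᵥ* G) i), K j)` is the uniform PMF on `(S → F) × F`: the observed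
coded symbols are jointly independent of the individual key `K j`, which is uniform. -/
theorem stmt_6 (F : Type*) [Field F] [Fintype F] (n : ℕ)
    (G : Matrix (Fin n) (Fin n) F) (S : Finset (Fin n)) (j : Fin n)
    (hli : LinearIndependent F
      (Sum.elim (fun i : S => fun l : Fin n => G l (i : Fin n))
        (fun _ : Unit => Pi.single j (1 : F)))) :
    (PMF.uniformOfFintype (Fin n → F)).map
        (fun K : Fin n → F => ((fun i : S => ∑ l, K l * G l (i : Fin n)), K j)) =
      PMF.uniformOfFintype ((S → F) × F) := by
  classical
  set f : (Fin n → F) →+ ((S → F) × F) :=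
    { toFun := fun K => ((fun i : S => ∑ l, K l * G l (i : Fin n)), K j)
      map_zero' := by
        refine Prod.ext ?_ rfl
        funext i; simp
      map_add' := by
        intro K K'
        refine Prod.ext ?_ rfl
        funext i
        simp [add_mul, Finset.sum_add_distrib] } with hf
  have hsurj : Surjective f := by
    intro yc
    obtain ⟨y, c⟩ := yc
    set M : Matrix (↥S ⊕ Unit) (Fin n) F :=
      Matrix.of (Sum.elim (fun (i : S) (l : Fin n) => G l (i : Fin n))
        (fun _ : Unit => Pi.single j (1 : F))) with hM
    have hMli : LinearIndependent F (fun k => M k) := hli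
    obtain ⟨K, hK⟩ := mulVec_surjective_of_li M hMli (Sum.elim y (fun _ => c))
    refine ⟨K, ?_⟩
    have h1 : ∀ i : S, (M.mulVec K) (Sum.inl i) = y i := fun i => congrFun hK (Sum.inl i)
    have h2 : (M.mulVec K) (Sum.inr ()) = c := congrFun hK (Sum.inr ())
    refine Prod.ext ?_ ?_
    · funext i
      have := h1 i
      simp only [Matrix.mulVec, dotProduct, hM, Matrix.of_apply, Sum.elim_inl] at this
      simpa [hf, mul_comm] using this
    · simp only [Matrix.mulVec, dotProduct, hM, Matrix.of_apply, Sum.elim_inr,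
        Pi.single_apply, ite_mul, one_mul, zero_mul] at h2
      rw [Finset.sum_ite_eq' Finset.univ j K] at h2
      simpa [hf] using h2
  exact uniform_map_of_addHom f hsurj
end

section
/- Let F be a field, n a natural number, G an invertible n × n matrix over F, and i, j : Fin n. Then the standard basis vector e_j lies in the span of the columns of G with index different from i if and only if the (i, j) entry of G⁻¹ is zero. -/
/-- For an invertible `n × n` matrix `G` over a field `F`, the standard basis vector
`e_j` lies in the span of the columns of `G` with index different from `i` if and only if
the `(i, j)` entry of `G⁻¹` is zero. -/
theorem stmt_7 (F : Type*) [Field F] (n : ℕ) (G : Matrix (Fin n) (Fin n) F)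
    (hG : IsUnit G) (i j : Fin n) :
    Pi.single j (1 : F) ∈
        Submodule.span F
          (Set.range fun l : {l : Fin n // l ≠ i} => fun m : Fin n => G m (l : Fin n)) ↔
      G⁻¹ i j = 0 := by
  have hd : IsUnit G.det := (Matrix.isUnit_iff_isUnit_det G).mp hG
  have hinv : G⁻¹ * G = 1 := Matrix.nonsing_inv_mul G hd
  have hinv' : G * G⁻¹ = 1 := Matrix.mul_nonsing_inv G hd
  constructor
  · intro h
    set φ : (Fin n → F) →ₗ[F] F :=
      (LinearMap.proj i).comp (Matrix.mulVecLin G⁻¹) with hφ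
    have hle : Submodule.span F
        (Set.range fun l : {l : Fin n // l ≠ i} => fun m : Fin n => G m (l : Fin n)) ≤
        LinearMap.ker φ := by
      rw [Submodule.span_le]
      rintro _ ⟨⟨l, hl⟩, rfl⟩
      have h1 : (G⁻¹ * G) i l = 0 := by
        rw [hinv, Matrix.one_apply_ne (Ne.symm hl)]
      simp only [SetLike.mem_coe, LinearMap.mem_ker, hφ, LinearMap.comp_apply,
        Matrix.mulVecLin_apply, LinearMap.proj_apply]
      simpa [Matrix.mul_apply, Matrix.mulVec, dotProduct] using h1
    have hz := hle h
    simp only [LinearMap.mem_ker, hφ, LinearMap.comp_apply, Matrix.mulVecLin_apply,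
      LinearMap.proj_apply] at hz
    simpa [Matrix.mulVec, dotProduct, Pi.single_apply, mul_comm] using hz
  · intro h0
    have key : Pi.single j (1 : F) =
        ∑ l : Fin n, G⁻¹ l j • (fun m : Fin n => G m l) := by
      funext m
      have h1 : (G * G⁻¹) m j = (Pi.single j (1 : F) : Fin n → F) m := by
        rw [hinv']
        simp [Matrix.one_apply, Pi.single_apply, eq_comm]
      rw [← h1, Matrix.mul_apply, Finset.sum_apply]
      simp [mul_comm]
    rw [key]
    refine Submodule.sum_mem _ fun l _ => ?_
    by_cases hl : l = i
    · subst hl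
      rw [h0, zero_smul]
      exact Submodule.zero_mem _
    · exact Submodule.smul_mem _ _ (Submodule.subset_span ⟨⟨l, hl⟩, rfl⟩)
end

section
/- Let F be a finite field, n a natural number, G an invertible n × n matrix over F, and i, j : Fin n with (G⁻¹) i j ≠ 0. For a key vector K : Fin n → F write X = K ᵥ* G, i.e., X l = ∑ m, K m * G m l. Then the pushforward of the uniform PMF on (Fin n → F) under the map K ↦ ((fun l : {l : Fin n // l ≠ i} => X l), K j) equals the uniform PMF on ({l : Fin n // l ≠ i} → F) × F. In particular, even if an adversary observes all coded symbols except X_i, the individual key K j remains uniformly distributed and independent of the adversary's observation. -/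
open Matrix

private lemma sum_split {F : Type*} [AddCommMonoid F] {n : ℕ} (a : Fin n) (f : Fin n → F) :
    ∑ m, f m = f a + ∑ l : {l : Fin n // l ≠ a}, f l := by
  rw [Fintype.sum_eq_add_sum_compl a]
  congr 1
  exact Finset.sum_subtype _ (by simp) f

/-- Information-theoretic core of CHOKE's security.  If `G` is invertible and
`(G⁻¹) i j ≠ 0`, then the pushforward of the uniform PMF on key vectors `K : Fin n → F`
under `K ↦ ((fun l : {l // l ≠ i} => (K ᵥ* G) l), K j)` is the uniform PMF on
`({l // l ≠ i} → F) × F`: even observing all coded symbols except `X_i`, the individual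
key `K j` remains uniform and independent of the observation. -/
theorem stmt_8 (F : Type*) [Field F] [Fintype F] (n : ℕ)
    (G : Matrix (Fin n) (Fin n) F) (hG : IsUnit G) (i j : Fin n)
    (hij : G⁻¹ i j ≠ 0) :
    (PMF.uniformOfFintype (Fin n → F)).map
        (fun K : Fin n → F =>
          ((fun l : {l : Fin n // l ≠ i} => ∑ m, K m * G m (l : Fin n)), K j)) =
      PMF.uniformOfFintype (({l : Fin n // l ≠ i} → F) × F) := by
  classical
  have hdet : IsUnit G.det := (Matrix.isUnit_iff_isUnit_det G).mp hG
  have hGinv : G * G⁻¹ = 1 := Matrix.mul_nonsing_inv G hdet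
  have hinvG : G⁻¹ * G = 1 := Matrix.nonsing_inv_mul G hdet
  let recon : (({l : Fin n // l ≠ i} → F) × F) → (Fin n → F) := fun p m =>
    if h : m = i then (p.2 - ∑ l : {l : Fin n // l ≠ i}, p.1 l * G⁻¹ (l : Fin n) j) / G⁻¹ i j
    else p.1 ⟨m, h⟩
  let e : (Fin n → F) ≃ (({l : Fin n // l ≠ i} → F) × F) :=
  { toFun := fun K => ((fun l : {l : Fin n // l ≠ i} => (K ᵥ* G) (l : Fin n)), K j)
    invFun := fun p => (recon p) ᵥ* G⁻¹
    left_inv := by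
      intro K
      have hKj : K j = ((K ᵥ* G) ᵥ* G⁻¹) j := by
        rw [Matrix.vecMul_vecMul, hGinv, Matrix.vecMul_one]
      have hrec : recon ((fun l : {l : Fin n // l ≠ i} => (K ᵥ* G) (l : Fin n)), K j) = K ᵥ* G := by
        funext m
        by_cases h : m = i
        · subst h
          simp only [recon, dif_pos rfl]
          rw [hKj]
          have : ((K ᵥ* G) ᵥ* G⁻¹) j = ∑ l, (K ᵥ* G) l * G⁻¹ l j := rfl
          rw [this, sum_split m (fun l => (K ᵥ* G) l * G⁻¹ l j)]
          rw [add_sub_cancel_right]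
          exact mul_div_cancel_right₀ _ hij
        · simp [recon, h]
      simp only [hrec, Matrix.vecMul_vecMul, hGinv, Matrix.vecMul_one]
    right_inv := by
      intro p
      have hX : (recon p ᵥ* G⁻¹) ᵥ* G = recon p := by
        rw [Matrix.vecMul_vecMul, hinvG, Matrix.vecMul_one]
      have hXj : (recon p ᵥ* G⁻¹) j = p.2 := by
        have : (recon p ᵥ* G⁻¹) j = ∑ l, recon p l * G⁻¹ l j := rfl
        rw [this, sum_split i (fun l => recon p l * G⁻¹ l j)]
        have h1 : recon p i = (p.2 - ∑ l : {l : Fin n // l ≠ i}, p.1 l * G⁻¹ (l : Fin n) j) / G⁻¹ i j := by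
          simp [recon]
        have h2 : ∀ l : {l : Fin n // l ≠ i}, recon p (l : Fin n) = p.1 l := by
          intro l; simp [recon, l.2]
        rw [h1, div_mul_cancel₀ _ hij]
        simp only [h2]
        ring
      ext l
      · simp [hX, recon, l.2]
      · exact hXj }
  have hfun : (fun K : Fin n → F =>
          ((fun l : {l : Fin n // l ≠ i} => ∑ m, K m * G m (l : Fin n)), K j)) = e := by
    funext K
    rfl
  rw [hfun]
  have hcard : Fintype.card (Fin n → F) = Fintype.card (({l : Fin n // l ≠ i} → F) × F) :=
    Fintype.card_congr e
  ext x
  rw [PMF.map_apply, tsum_eq_single (e.symm x) (by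
    intro a ha
    rw [if_neg]
    exact fun h => ha (by simp [h]))]
  simp [PMF.uniformOfFintype_apply, hcard]
end

section
/- Let F be a field and let s, w, n be natural numbers with s + w = n. Let G_s* be an s × n matrix over F with G_s* * (G_s*)ᵀ = 1 (the s × s identity matrix), and let G_IS be a w × n matrix over F whose rows are linearly independent and which satisfies G_IS * (G_s*)ᵀ = 0. Then the row space of G_s* and the row space of G_IS are complementary submodules of (Fin n → F): their intersection is the zero submodule and their sum is all of (Fin n → F). -/
/-- Correctness of the individually secure code construction used by CHOKE.  If
`Gs * Gsᵀ = 1`, the rows of `GIS` are linearly independent, `GIS * Gsᵀ = 0`, and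
`s + w = n`, then the row spaces of `Gs` and `GIS` are complementary submodules of
`Fin n → F`: their intersection is `⊥` and their sum is `⊤`. -/
theorem stmt_10 (F : Type*) [Field F] (s w n : ℕ) (hswn : s + w = n)
    (Gs : Matrix (Fin s) (Fin n) F) (GIS : Matrix (Fin w) (Fin n) F)
    (hGs : Gs * Gs.transpose = 1)
    (hGIS : LinearIndependent F (fun r : Fin w => GIS r))
    (horth : GIS * Gs.transpose = 0) :
    Submodule.span F (Set.range fun r : Fin s => Gs r) ⊓
        Submodule.span F (Set.range fun r : Fin w => GIS r) = ⊥ ∧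
      Submodule.span F (Set.range fun r : Fin s => Gs r) ⊔
        Submodule.span F (Set.range fun r : Fin w => GIS r) = ⊤ := by
  have key : ∀ c : Fin s → F, (∑ i, c i • Gs i) = Matrix.vecMul c Gs := by
    intro c
    funext j
    simp [Matrix.vecMul, dotProduct, Finset.sum_apply]
  have key2 : ∀ d : Fin w → F, (∑ i, d i • GIS i) = Matrix.vecMul d GIS := by
    intro d
    funext j
    simp [Matrix.vecMul, dotProduct, Finset.sum_apply]
  have hGsLI : LinearIndependent F (fun r : Fin s => Gs r) := by
    rw [Fintype.linearIndependent_iff]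
    intro c hc i
    have : Matrix.vecMul (Matrix.vecMul c Gs) Gs.transpose = 0 := by
      rw [← key, hc]; simp
    rw [Matrix.vecMul_vecMul, hGs, Matrix.vecMul_one] at this
    exact congrFun this i
  have hinf : Submodule.span F (Set.range fun r : Fin s => Gs r) ⊓
      Submodule.span F (Set.range fun r : Fin w => GIS r) = ⊥ := by
    rw [Submodule.eq_bot_iff]
    rintro v ⟨hv1, hv2⟩
    rw [SetLike.mem_coe, Submodule.mem_span_range_iff_exists_fun F] at hv1 hv2
    obtain ⟨c, hc⟩ := hv1
    obtain ⟨d, hd⟩ := hv2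
    have hc0 : c = 0 := by
      have h1 : Matrix.vecMul v Gs.transpose = c := by
        rw [← hc, key, Matrix.vecMul_vecMul, hGs, Matrix.vecMul_one]
      have h2 : Matrix.vecMul v Gs.transpose = 0 := by
        rw [← hd, key2, Matrix.vecMul_vecMul, horth, Matrix.vecMul_zero]
      rw [← h1, h2]
    rw [← hc, key, hc0, Matrix.zero_vecMul]
  refine ⟨hinf, ?_⟩
  have hfin : Module.finrank F (Fin n → F) = n := by simp
  apply Submodule.eq_top_of_disjoint
  · rw [finrank_span_eq_card hGsLI, finrank_span_eq_card hGIS, hfin]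
    simpa using hswn.ge
  · rw [disjoint_iff]; exact hinf
end
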